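/- arXiv:1406.5414 — 2 statements merged into one kernel-verified Lean document; each statement's English description precedes it below -/
import Mathlib

section
/- Fix $p \in [1, \infty]$ and let $q$ be the conjugate exponent. Let $C \subseteq L^p(\Omega, \mathcal{F}, P)$ be a convex cone with $C \supseteq -L^p_{\ge 0}$, $C \cap L^p_{\ge 0} = \{0\}$, and $C$ closed in the topology $\sigma(L^p, L^q)$. Then there exists a probability measure $Q$ equivalent to $P$ with density $dQ/dP \in L^q(P)$ such that $E_Q[Y] \le 0$ for all $Y \in C$. -/
open MeasureTheory Filter Set
open scoped ENNReal Topology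

noncomputable section
open Classical

variable {Ω : Type*}

/-- A simple predictable strategy `H = ∑_{i=0}^n K_i 1_{(τ_i, τ_{i+1}]}` with stopping times
`0 = τ_0 ≤ … ≤ τ_{n+1} = 1` and `K_i` being `𝓕_{τ_i}`-measurable. -/
structure SimpleStrategy {m : MeasurableSpace Ω} (𝓕 : Filtration ℝ m) where
  n : ℕ
  τ : ℕ → Ω → ℝ
  K : ℕ → Ω → ℝ
  isStopping : ∀ i, IsStoppingTime 𝓕 (fun ω => (τ i ω : WithTop ℝ))
  mono : ∀ ω, Monotone fun i => τ i ω
  zero : ∀ ω, τ 0 ω = 0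
  last : ∀ ω, τ (n + 1) ω = 1
  meas : ∀ i, Measurable[(isStopping i).measurableSpace] (K i)

namespace SimpleStrategy

variable {m : MeasurableSpace Ω} {𝓕 : Filtration ℝ m}

/-- The strategy is bounded by `1`. -/
def Bounded1 (H : SimpleStrategy 𝓕) : Prop := ∀ i ω, |H.K i ω| ≤ 1

/-- The (elementary) stochastic integral `(H ∙ X)_t`. -/
def integral (H : SimpleStrategy 𝓕) (X : ℝ → Ω → ℝ) (t : ℝ) (ω : Ω) : ℝ :=
  ∑ i ∈ Finset.range (H.n + 1),
    H.K i ω * (X (min (H.τ (i + 1) ω) t) ω - X (min (H.τ i ω) t) ω)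

end SimpleStrategy

/-- Running supremum of `|X|` over the time interval `[0,1]`. -/
def runSup (X : ℝ → Ω → ℝ) (ω : Ω) : ℝ :=
  sSup ((fun t => |X t ω|) '' Icc (0 : ℝ) 1)

/-- A sequence of random variables is bounded in `L⁰` (bounded in probability). -/
def L0BoundedSeq {m : MeasurableSpace Ω} (μ : Measure Ω) (ξ : ℕ → Ω → ℝ) : Prop :=
  Tendsto (fun a : ℝ => ⨆ n, μ {ω | a ≤ |ξ n ω|}) atTop (𝓝 (0 : ℝ≥0∞))

/-- Predictable uniform tightness (P-UT) of a sequence of processes on `[0,1]`. -/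
def PUT {m : MeasurableSpace Ω} (𝓕 : Filtration ℝ m) (μ : Measure Ω)
    (X : ℕ → ℝ → Ω → ℝ) : Prop :=
  ∀ t ∈ Icc (0 : ℝ) 1,
    Tendsto (fun a : ℝ =>
        ⨆ (n : ℕ) (H : SimpleStrategy 𝓕) (_ : H.Bounded1),
          μ {ω | a ≤ |H.integral (X n) t ω|}) atTop (𝓝 (0 : ℝ≥0∞))

/-- A process is càdlàg (right-continuous with left limits) in time, for every `ω`. -/
def IsCadlag (X : ℝ → Ω → ℝ) : Prop :=
  ∀ ω, (∀ t, ContinuousWithinAt (fun s => X s ω) (Ici t) t) ∧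
    ∀ t, ∃ l, Tendsto (fun s => X s ω) (𝓝[<] t) (𝓝 l)

/-- The jump `ΔX_t = X_t - X_{t-}` of a process. -/
def jump (X : ℝ → Ω → ℝ) (t : ℝ) (ω : Ω) : ℝ :=
  X t ω - Function.leftLim (fun s => X s ω) t

/-- Uniform convergence in probability on `[0,1]` (ucp). -/
def TendstoUCP {m : MeasurableSpace Ω} (μ : Measure Ω) (X : ℕ → ℝ → Ω → ℝ)
    (Y : ℝ → Ω → ℝ) : Prop :=
  ∀ ε : ℝ, 0 < ε →
    Tendsto (fun n => μ {ω | ε ≤ runSup (fun t ω' => X n t ω' - Y t ω') ω}) atTop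
      (𝓝 (0 : ℝ≥0∞))

/-- A finite partition `0 = t_0 < t_1 < … < t_r = 1` of `[0,1]`. -/
structure Partition01 where
  r : ℕ
  t : ℕ → ℝ
  pos : 0 < r
  zero : t 0 = 0
  last : t r = 1
  mono : ∀ i < r, t i < t (i + 1)

/-- The mesh of a partition. -/
def Partition01.mesh (P : Partition01) : ℝ :=
  ⨆ i : Fin P.r, (P.t (i.1 + 1) - P.t i.1)

/-- Riemann-type sum for the quadratic covariation along a partition, up to time `t`. -/
def qcovSum (P : Partition01) (X Y : ℝ → Ω → ℝ) (t : ℝ) (ω : Ω) : ℝ :=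
  ∑ i ∈ Finset.range P.r,
    (X (min (P.t (i + 1)) t) ω - X (min (P.t i) t) ω) *
      (Y (min (P.t (i + 1)) t) ω - Y (min (P.t i) t) ω)

/-- `Q` is the quadratic covariation process `[X,Y]` : along every sequence of partitions with
vanishing mesh the Riemann sums converge in probability. -/
def IsQCovProcess {m : MeasurableSpace Ω} (μ : Measure Ω) (X Y Q : ℝ → Ω → ℝ) : Prop :=
  ∀ P : ℕ → Partition01, Tendsto (fun k => (P k).mesh) atTop (𝓝 (0 : ℝ)) →
    ∀ t ∈ Icc (0 : ℝ) 1,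
      TendstoInMeasure μ (fun k ω => qcovSum (P k) X Y t ω) atTop (Q t)

/-- Riemann-type sum with left endpoints for the stochastic integral `H_- ∙ X`. -/
def leftRiemannSum (P : Partition01) (H X : ℝ → Ω → ℝ) (t : ℝ) (ω : Ω) : ℝ :=
  ∑ i ∈ Finset.range P.r,
    H (P.t i) ω * (X (min (P.t (i + 1)) t) ω - X (min (P.t i) t) ω)

/-- `I` is the stochastic integral process `H_- ∙ X`, characterized as the limit in
probability of left-endpoint Riemann sums along partitions with vanishing mesh. -/
def IsLeftIntegral {m : MeasurableSpace Ω} (μ : Measure Ω) (H X I : ℝ → Ω → ℝ) : Prop :=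
  ∀ P : ℕ → Partition01, Tendsto (fun k => (P k).mesh) atTop (𝓝 (0 : ℝ)) →
    ∀ t ∈ Icc (0 : ℝ) 1,
      TendstoInMeasure μ (fun k ω => leftRiemannSum (P k) H X t ω) atTop (I t)

/-- The process `X` stopped at the random time `τ`. -/
def stoppedAt (X : ℝ → Ω → ℝ) (τ : Ω → ℝ) : ℝ → Ω → ℝ := fun t ω => X (min t (τ ω)) ω

/-- A local martingale on `[0,1]`. -/
def IsLocalMartingale {m : MeasurableSpace Ω} (𝓕 : Filtration ℝ m) (μ : Measure Ω)
    (N : ℝ → Ω → ℝ) : Prop :=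
  ∃ τ : ℕ → Ω → ℝ, (∀ k, IsStoppingTime 𝓕 (fun ω => (τ k ω : WithTop ℝ))) ∧ (∀ ω, Monotone fun k => τ k ω) ∧
    (∀ ω, ∃ k, 1 ≤ τ k ω) ∧ ∀ k, Martingale (stoppedAt N (τ k)) 𝓕 μ

/-- The predictable σ-algebra on `ℝ × Ω`, generated by the stochastic intervals
`(a,b] × A`, `A ∈ 𝓕_a`, and `{0} × A`, `A ∈ 𝓕_0`. -/
def predictableSigma {m : MeasurableSpace Ω} (𝓕 : Filtration ℝ m) :
    MeasurableSpace (ℝ × Ω) :=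
  MeasurableSpace.generateFrom
    ({s | ∃ (a b : ℝ) (A : Set Ω), MeasurableSet[𝓕 a] A ∧ s = Ioc a b ×ˢ A} ∪
      {s | ∃ A : Set Ω, MeasurableSet[𝓕 0] A ∧ s = ({0} : Set ℝ) ×ˢ A})

/-- A predictable process. -/
def Predictable {m : MeasurableSpace Ω} (𝓕 : Filtration ℝ m) (H : ℝ → Ω → ℝ) : Prop :=
  @Measurable _ _ (predictableSigma 𝓕) _ fun p : ℝ × Ω => H p.1 p.2

/-- The Emery (semimartingale) distance on processes on `[0,1]`. -/
def emeryDist {m : MeasurableSpace Ω} (𝓕 : Filtration ℝ m) (μ : Measure Ω)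
    (X Y : ℝ → Ω → ℝ) : ℝ :=
  ⨆ H : {H : SimpleStrategy 𝓕 // H.Bounded1},
    ∫ ω, min (runSup (fun t ω' =>
      H.1.integral (fun s ω'' => X s ω'' - Y s ω'') t ω') ω) 1 ∂μ

/-- A set of processes is (sequentially) closed in the Emery topology. -/
def EmeryClosed {m : MeasurableSpace Ω} (𝓕 : Filtration ℝ m) (μ : Measure Ω)
    (𝒳 : Set (ℝ → Ω → ℝ)) : Prop :=
  ∀ (X : ℕ → ℝ → Ω → ℝ) (Y : ℝ → Ω → ℝ), (∀ n, X n ∈ 𝒳) →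
    Tendsto (fun n => emeryDist 𝓕 μ (X n) Y) atTop (𝓝 (0 : ℝ)) → Y ∈ 𝒳

/-- An abstract stochastic integral operator `(H, X) ↦ H ∙ X`, assumed to be additive,
to agree with the elementary integral on elementary predictable strategies, to be monotone
against integrators of monotone paths (Stieltjes case) and to satisfy associativity. -/
structure StochInt {m : MeasurableSpace Ω} (𝓕 : Filtration ℝ m) where
  int : (ℝ → Ω → ℝ) → (ℝ → Ω → ℝ) → ℝ → Ω → ℝ
  add_strat : ∀ H G X t ω,
    int (fun s ω' => H s ω' + G s ω') X t ω = int H X t ω + int G X t ω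
  add_integrator : ∀ H X Y t ω,
    int H (fun s ω' => X s ω' + Y s ω') t ω = int H X t ω + int H Y t ω
  elem : ∀ (u v : ℝ) (K : Ω → ℝ), Measurable[𝓕 u] K → ∀ X t ω,
    int (fun s ω' => K ω' * (Ioc u v).indicator (fun _ => (1 : ℝ)) s) X t ω
      = K ω * (X (min v t) ω - X (min u t) ω)
  mono_fv : ∀ H G X, (∀ s ω, H s ω ≤ G s ω) → (∀ ω, Monotone fun s => X s ω) →
    ∀ t ω, int H X t ω ≤ int G X t ω
  assoc : ∀ H G X t ω, int H (int G X) t ω = int (fun s ω' => H s ω' * G s ω') X t ω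

/-- Kabanov's concatenation property of a set of (1-admissible) wealth processes. -/
def ConcatProperty {m : MeasurableSpace Ω} (𝓕 : Filtration ℝ m) (I : StochInt 𝓕)
    (𝒳 : Set (ℝ → Ω → ℝ)) : Prop :=
  ∀ H G : ℝ → Ω → ℝ, Predictable 𝓕 H → Predictable 𝓕 G →
    (∃ c, ∀ s ω, |H s ω| ≤ c) → (∃ c, ∀ s ω, |G s ω| ≤ c) →
    (∀ s ω, 0 ≤ H s ω) → (∀ s ω, 0 ≤ G s ω) → (∀ s ω, H s ω * G s ω = 0) →
    ∀ X ∈ 𝒳, ∀ Y ∈ 𝒳,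
      (∀ t ∈ Icc (0 : ℝ) 1, ∀ ω, -1 ≤ I.int H X t ω + I.int G Y t ω) →
      (fun t ω => I.int H X t ω + I.int G Y t ω) ∈ 𝒳

/-- The abstract setting of Kabanov: `𝒳₁` is a convex set of semimartingales starting at `0`,
bounded from below by `-1`, closed in the Emery topology, with the concatenation property. -/
def KabanovSetting {m : MeasurableSpace Ω} (𝓕 : Filtration ℝ m) (μ : Measure Ω)
    (I : StochInt 𝓕) (𝒳 : Set (ℝ → Ω → ℝ)) : Prop :=
  Convex ℝ 𝒳 ∧ (∀ X ∈ 𝒳, ∀ ω, X 0 ω = 0) ∧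
    (∀ X ∈ 𝒳, ∀ t ∈ Icc (0 : ℝ) 1, ∀ ω, -1 ≤ X t ω) ∧
    EmeryClosed 𝓕 μ 𝒳 ∧ ConcatProperty 𝓕 I 𝒳

/-!
Every nonzero `x ≥ 0` in `Lᵖ` lies outside the weakly closed convex cone `C`, so Hahn–Banach
separation in `σ(Lᵖ, L^q)` gives `g ∈ L^q` with `∫ f g ≤ 0` on `C` and `∫ x g > 0`; since
`-Lᵖ_{≥0} ⊆ C`, such `g` are nonnegative. These separating densities form a cone that is closed
under convergent countable positive combinations, so their supports are closed under countable
unions up to null sets. An exhaustion argument then produces a separating `g` whose support is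
essentially maximal; it must be all of `Ω`, as otherwise separating the indicator of the
complement would enlarge it. Normalizing `g` gives `dQ/dP`.
-/

theorem exists_strongDual_nonpos_of_notMem_cone {E : Type*} [TopologicalSpace E]
    [AddCommGroup E] [Module ℝ E] [IsTopologicalAddGroup E] [ContinuousSMul ℝ E]
    [LocallyConvexSpace ℝ E] {C : Set E} {x : E} (hconv : Convex ℝ C)
    (hcone : ∀ c : ℝ, 0 ≤ c → ∀ y ∈ C, c • y ∈ C) (h0 : (0 : E) ∈ C) (hclosed : IsClosed C)
    (hx : x ∉ C) : ∃ φ : StrongDual ℝ E, (∀ y ∈ C, φ y ≤ 0) ∧ 0 < φ x := by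
  obtain ⟨φ, u, hφC, hφx⟩ := geometric_hahn_banach_closed_point hconv hclosed hx
  have hu : 0 < u := by simpa using hφC 0 h0
  refine ⟨φ, fun y hy => ?_, hu.trans hφx⟩
  by_contra! hφy
  simpa [div_mul_cancel₀ _ hφy.ne'] using hφC _ (hcone _ (div_nonneg hu.le hφy.le) y hy)

namespace MeasureTheory

variable {m : MeasurableSpace Ω} {μ : Measure Ω}

theorem exists_ae_greatest_of_forall_seq [IsFiniteMeasure μ] {𝒮 : Set (Set Ω)}
    (hmeas : ∀ s ∈ 𝒮, MeasurableSet s) (hne : 𝒮.Nonempty)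
    (hbdd : ∀ t : ℕ → Set Ω, (∀ n, t n ∈ 𝒮) → ∃ s ∈ 𝒮, ∀ n, t n ≤ᵐ[μ] s) :
    ∃ s ∈ 𝒮, ∀ t ∈ 𝒮, t ≤ᵐ[μ] s := by
  have hle : ∀ s ∈ 𝒮, μ s ≤ sSup (μ '' 𝒮) := fun s hs => le_sSup (mem_image_of_mem μ hs)
  obtain ⟨u, -, hu, hu𝒮⟩ := exists_seq_tendsto_sSup (hne.image μ) (OrderTop.bddAbove _)
  choose t ht𝒮 htu using hu𝒮
  obtain ⟨s, hs𝒮, hts⟩ := hbdd t ht𝒮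
  have hs : sSup (μ '' 𝒮) ≤ μ s :=
    le_of_tendsto' hu fun n => htu n ▸ measure_mono_ae (hts n)
  refine ⟨s, hs𝒮, fun t' ht' => ?_⟩
  obtain ⟨s', hs'𝒮, hss'⟩ := hbdd (fun n => if n = 0 then s else t') fun n => by
    split_ifs <;> assumption
  -- `s` already has the largest measure in `𝒮`, so its a.e. upper bound `s'` is a.e. equal to it
  have hss'_eq : s =ᵐ[μ] s' := ae_eq_of_ae_subset_of_measure_ge (hss' 0)
    ((hle s' hs'𝒮).trans hs) (hmeas s hs𝒮).nullMeasurableSet (measure_ne_top μ _)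
  exact (hss' 1).trans hss'_eq.symm.le

variable {p q : ℝ≥0∞}

theorem Lp.smul_nonneg {c : ℝ} (hc : 0 ≤ c) {g : Lp ℝ q μ} (hg : 0 ≤ g) : 0 ≤ c • g := by
  rw [← Lp.coeFn_nonneg] at hg ⊢
  filter_upwards [hg, Lp.coeFn_smul c g] with ω hω hsmul
  rw [hsmul]
  exact _root_.smul_nonneg hc hω

theorem indicatorConstLp_nonneg {s : Set Ω} (hs : MeasurableSet s) (hμs : μ s ≠ ∞) {c : ℝ}
    (hc : 0 ≤ c) : 0 ≤ indicatorConstLp p hs hμs c := by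
  rw [← Lp.coeFn_nonneg]
  filter_upwards [indicatorConstLp_coeFn (p := p) (hs := hs) (hμs := hμs) (c := c)] with ω hω
  rw [hω]
  exact indicator_nonneg (fun _ _ => hc) ω

theorem indicatorConstLp_ne_zero {E : Type*} [NormedAddCommGroup E] {s : Set Ω}
    (hs : MeasurableSet s) (hμs : μ s ≠ ∞) (hμs₀ : μ s ≠ 0) {c : E} (hc : c ≠ 0) :
    indicatorConstLp p hs hμs c ≠ 0 := by
  rw [← indicatorConstLp_empty (p := p) (μ := μ) (c := c), Ne, indicatorConstLp_inj _ _ _ _ hc,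
    ae_eq_empty]
  exact hμs₀

theorem integral_indicatorConstLp_mul {s : Set Ω} (hs : MeasurableSet s) (hμs : μ s ≠ ∞)
    (c : ℝ) (g : Ω → ℝ) :
    ∫ ω, indicatorConstLp p hs hμs c ω * g ω ∂μ = c * ∫ ω in s, g ω ∂μ := by
  rw [← integral_const_mul, ← integral_indicator hs]
  refine integral_congr_ae ?_
  filter_upwards [indicatorConstLp_coeFn (p := p) (hs := hs) (hμs := hμs) (c := c)] with ω hω
  by_cases hωs : ω ∈ s <;> simp [hω, hωs]

end MeasureTheory

namespace KrepsYan

variable {m : MeasurableSpace Ω} {μ : Measure Ω} {p q : ℝ≥0∞}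

variable (q) in
def polarCone (C : Set (Lp ℝ p μ)) : Set (Lp ℝ q μ) :=
  {g | ∀ f ∈ C, ∫ ω, f ω * g ω ∂μ ≤ 0}

variable [Fact (1 ≤ p)] [Fact (1 ≤ q)] [p.HolderConjugate q]

variable (μ p q) in
def pairing : Lp ℝ p μ →L[ℝ] Lp ℝ q μ →L[ℝ] ℝ :=
  (ContinuousLinearMap.mul ℝ ℝ).lpPairing μ p q

theorem pairing_apply (f : Lp ℝ p μ) (g : Lp ℝ q μ) :
    pairing μ p q f g = ∫ ω, f ω * g ω ∂μ :=
  ContinuousLinearMap.lpPairing_eq_integral _ f g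

theorem weakBilin_pairing_topology :
    WeakBilin.instTopologicalSpace (pairing μ p q).toLinearMap₁₂ =
      ⨅ g : Lp ℝ q μ,
        TopologicalSpace.induced (fun f : Lp ℝ p μ => ∫ ω, f ω * g ω ∂μ) inferInstance := by
  simp_rw [← pairing_apply]
  rw [WeakBilin.instTopologicalSpace, Pi.topologicalSpace, induced_iInf]
  simp only [induced_compose]
  rfl

theorem nonneg_of_mem_polarCone [IsFiniteMeasure μ] {C : Set (Lp ℝ p μ)}
    (hneg : ∀ f : Lp ℝ p μ, 0 ≤ f → -f ∈ C) {g : Lp ℝ q μ} (hg : g ∈ polarCone q C) :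
    0 ≤ g := by
  rw [← Lp.coeFn_nonneg]
  refine ae_nonneg_of_forall_setIntegral_nonneg ((Lp.memLp g).integrable Fact.out)
    fun s hs _ => ?_
  have hx := hg _ (hneg _ (indicatorConstLp_nonneg hs (measure_ne_top μ s) zero_le_one))
  rwa [← pairing_apply, map_neg, neg_apply, pairing_apply, integral_indicatorConstLp_mul,
    one_mul, neg_nonpos] at hx

theorem smul_mem_polarCone {C : Set (Lp ℝ p μ)} {c : ℝ} (hc : 0 ≤ c) {g : Lp ℝ q μ}
    (hg : g ∈ polarCone q C) : c • g ∈ polarCone q C := fun f hf => by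
  rw [← pairing_apply, map_smul, smul_eq_mul, pairing_apply]
  exact mul_nonpos_of_nonneg_of_nonpos hc (hg f hf)

theorem tsum_mem_polarCone {C : Set (Lp ℝ p μ)} {g : ℕ → Lp ℝ q μ} (hsum : Summable g)
    (hg : ∀ n, g n ∈ polarCone q C) : ∑' n, g n ∈ polarCone q C := fun f hf => by
  rw [← pairing_apply, (pairing μ p q f).map_tsum hsum]
  exact tsum_nonpos fun n => pairing_apply f (g n) ▸ hg n f hf

theorem exists_mem_polarCone_support_ae_ge {C : Set (Lp ℝ p μ)} {g : ℕ → Lp ℝ q μ}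
    (hg : ∀ n, g n ∈ polarCone q C) (hg0 : ∀ n, 0 ≤ g n) :
    ∃ h ∈ polarCone q C, ∀ n, {ω | 0 < g n ω} ≤ᵐ[μ] {ω | 0 < h ω} := by
  set a : ℕ → ℝ := fun n => (2 ^ n * (1 + ‖g n‖))⁻¹
  have ha : ∀ n, 0 < a n := fun n => by positivity
  have hsum : Summable fun n => a n • g n := by
    refine Summable.of_norm_bounded summable_geometric_two fun n => ?_
    rw [norm_smul, Real.norm_of_nonneg (ha n).le]
    calc a n * ‖g n‖ ≤ a n * (1 + ‖g n‖) := by gcongr; linarith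
      _ = (1 / 2) ^ n := by simp only [a]; field_simp; rw [← mul_pow]; norm_num
  refine ⟨∑' n, a n • g n,
    tsum_mem_polarCone hsum fun n => smul_mem_polarCone (ha n).le (hg n), fun n => ?_⟩
  have hle : a n • g n ≤ ∑' n, a n • g n :=
    hsum.le_tsum n fun j _ => Lp.smul_nonneg (ha j).le (hg0 j)
  rw [← Lp.coeFn_le] at hle
  filter_upwards [hle, Lp.coeFn_smul (a n) (g n)] with ω hle hsmul hpos
  have : a n * g n ω ≤ (∑' n, a n • g n : Lp ℝ q μ) ω := by simpa [hsmul] using hle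
  exact (mul_pos (ha n) hpos).trans_le this

variable [IsFiniteMeasure μ] {C : Set (Lp ℝ p μ)} (hconv : Convex ℝ C)
  (hcone : ∀ c : ℝ, 0 ≤ c → ∀ f ∈ C, c • f ∈ C) (hneg : ∀ f : Lp ℝ p μ, 0 ≤ f → -f ∈ C)
  (hpos : ∀ f ∈ C, 0 ≤ f → f = 0)
  (hclosed : @IsClosed _ (⨅ g : Lp ℝ q μ,
    TopologicalSpace.induced (fun f : Lp ℝ p μ => ∫ ω, f ω * g ω ∂μ) inferInstance) C)
include hconv hcone hneg hpos hclosed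

theorem exists_mem_polarCone_setIntegral_pos {A : Set Ω} (hA : MeasurableSet A)
    (hμA : μ A ≠ 0) : ∃ g ∈ polarCone q C, 0 < ∫ ω in A, g ω ∂μ := by
  set x := indicatorConstLp p hA (measure_ne_top μ A) (1 : ℝ)
  have hx : x ∉ C := fun hxC => indicatorConstLp_ne_zero hA _ hμA one_ne_zero
    (hpos x hxC (indicatorConstLp_nonneg hA _ zero_le_one))
  have h0 : (0 : Lp ℝ p μ) ∈ C := by simpa using hneg 0 le_rfl
  rw [← weakBilin_pairing_topology (p := p)] at hclosed
  obtain ⟨φ, hφC, hφx⟩ := exists_strongDual_nonpos_of_notMem_cone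
    (E := WeakBilin (pairing μ p q).toLinearMap₁₂) hconv hcone h0 hclosed hx
  obtain ⟨g, rfl⟩ := LinearMap.dualEmbedding_surjective _ φ
  refine ⟨g, fun f hf => pairing_apply f g ▸ hφC f hf, ?_⟩
  rw [← one_mul (∫ ω in A, _ ∂μ), ← integral_indicatorConstLp_mul hA (measure_ne_top μ A),
    ← pairing_apply x g]
  exact hφx

theorem exists_mem_polarCone_ae_pos : ∃ g ∈ polarCone q C, ∀ᵐ ω ∂μ, 0 < g ω := by
  have hmeas : ∀ g : Lp ℝ q μ, MeasurableSet {ω | 0 < g ω} := fun g =>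
    measurableSet_lt measurable_const (Lp.stronglyMeasurable g).measurable
  have h0 : (0 : Lp ℝ q μ) ∈ polarCone q C := fun f _ => by
    rw [← pairing_apply, map_zero]
  obtain ⟨_, ⟨g, hg, rfl⟩, hmax⟩ := exists_ae_greatest_of_forall_seq (μ := μ)
      (𝒮 := (fun g : Lp ℝ q μ => {ω | 0 < g ω}) '' polarCone q C)
      (forall_mem_image.2 fun g _ => hmeas g) ⟨_, mem_image_of_mem _ h0⟩ fun t ht => by
    choose g hg hgt using ht
    obtain ⟨h, hh, hgh⟩ := exists_mem_polarCone_support_ae_ge hg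
      fun n => nonneg_of_mem_polarCone hneg (hg n)
    exact ⟨_, mem_image_of_mem _ hh, fun n => hgt n ▸ hgh n⟩
  refine ⟨g, hg, ?_⟩
  by_contra hnot
  obtain ⟨h, hh, hh_pos⟩ := exists_mem_polarCone_setIntegral_pos hconv hcone hneg hpos hclosed
    (hmeas g).compl (by rwa [ae_iff] at hnot)
  refine hh_pos.ne' (setIntegral_eq_zero_of_ae_eq_zero ?_)
  filter_upwards [hmax _ (mem_image_of_mem _ hh),
    (Lp.coeFn_nonneg h).2 (nonneg_of_mem_polarCone hneg hh)] with ω hsub hnn hωA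
  exact le_antisymm (not_lt.1 fun hlt => hωA (hsub hlt)) hnn

end KrepsYan

theorem kreps_yan_general
    {m : MeasurableSpace Ω} (μ : Measure Ω) [IsProbabilityMeasure μ]
    (p q : ℝ≥0∞) (hpq : p⁻¹ + q⁻¹ = 1)
    (C : Set (Lp ℝ p μ))
    (hconv : Convex ℝ C)
    (hcone : ∀ c : ℝ, 0 ≤ c → ∀ f ∈ C, c • f ∈ C)
    (hneg : ∀ f : Lp ℝ p μ, (∀ᵐ ω ∂μ, 0 ≤ f ω) → -f ∈ C)
    (hpos : ∀ f ∈ C, (∀ᵐ ω ∂μ, 0 ≤ f ω) → f = 0)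
    (hclosed : @IsClosed _ (⨅ g : Lp ℝ q μ,
        TopologicalSpace.induced (fun f : Lp ℝ p μ => ∫ ω, f ω * g ω ∂μ) inferInstance) C) :
    ∃ Z : Ω → ℝ, (∀ᵐ ω ∂μ, 0 < Z ω) ∧ MemLp Z q μ ∧ (∫ ω, Z ω ∂μ = 1) ∧
      ∀ f ∈ C, ∫ ω, Z ω * f ω ∂μ ≤ 0 := by
  have : p.HolderConjugate q := ⟨by rwa [inv_one]⟩
  have : Fact (1 ≤ p) := ⟨ENNReal.HolderConjugate.one_le p q⟩
  have : Fact (1 ≤ q) := ⟨ENNReal.HolderConjugate.one_le q p⟩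
  obtain ⟨g, hg, hg_pos⟩ := KrepsYan.exists_mem_polarCone_ae_pos hconv hcone
    (fun f hf => hneg f ((Lp.coeFn_nonneg f).2 hf))
    (fun f hf hf0 => hpos f hf ((Lp.coeFn_nonneg f).2 hf0)) hclosed
  have hc : 0 < ∫ ω, g ω ∂μ := by
    rw [integral_pos_iff_support_of_nonneg_ae (hg_pos.mono fun _ h => h.le)
      ((Lp.memLp g).integrable Fact.out)]
    exact lt_of_lt_of_le (by simp : 0 < μ univ) (measure_mono_ae (hg_pos.mono fun ω h _ => h.ne'))
  refine ⟨fun ω => (∫ ω, g ω ∂μ)⁻¹ * g ω, hg_pos.mono fun ω h => mul_pos (inv_pos.2 hc) h,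
    (Lp.memLp g).const_mul _, by rw [integral_const_mul, inv_mul_cancel₀ hc.ne'], fun f hf => ?_⟩
  simp_rw [mul_assoc, mul_comm (g _)]
  rw [integral_const_mul]
  exact mul_nonpos_of_nonneg_of_nonpos (inv_nonneg.2 hc.le) (hg f hf)

/-- **The Kreps–Yan theorem.** Let `1 ≤ p ≤ ∞` with conjugate exponent `q`, and let
`C ⊆ Lᵖ` be a convex cone containing `-Lᵖ_{≥0}`, with `C ∩ Lᵖ_{≥0} = {0}`, closed in the
weak topology `σ(Lᵖ, L^q)`. Then there is a probability density `Z ∈ L^q`, `Z > 0` a.s.,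
`E[Z] = 1`, separating `C`: `E[Z·Y] ≤ 0` for all `Y ∈ C`. -/
theorem kreps_yan
    {m : MeasurableSpace Ω} (μ : Measure Ω) [IsProbabilityMeasure μ]
    (p q : ℝ≥0∞) (hp : 1 ≤ p) (hpq : p⁻¹ + q⁻¹ = 1)
    (C : Set (Lp ℝ p μ))
    (hconv : Convex ℝ C)
    (hcone : ∀ c : ℝ, 0 ≤ c → ∀ f ∈ C, c • f ∈ C)
    (hneg : ∀ f : Lp ℝ p μ, (∀ᵐ ω ∂μ, 0 ≤ f ω) → -f ∈ C)
    (hpos : ∀ f ∈ C, (∀ᵐ ω ∂μ, 0 ≤ f ω) → f = 0)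
    (hclosed : @IsClosed _ (⨅ g : Lp ℝ q μ,
        TopologicalSpace.induced (fun f : Lp ℝ p μ => ∫ ω, f ω * g ω ∂μ) inferInstance) C) :
    ∃ Z : Ω → ℝ, (∀ᵐ ω ∂μ, 0 < Z ω) ∧ MemLp Z q μ ∧ (∫ ω, Z ω ∂μ = 1) ∧
      ∀ f ∈ C, ∫ ω, Z ω * f ω ∂μ ≤ 0 :=
  kreps_yan_general (m := m) μ p q hpq C hconv hcone hneg hpos hclosed
end
end

section
/- Let $(X^n)_{n\ge0}$ be a sequence of semimartingales with $X^n_0 = 0$ converging pathwise uniformly in probability on $[0,1]$ to a càdlàg process $X$. Then there exists $C > 0$ such that, defining $\check X^{n} = \sum_{s \le \cdot} \Delta X^n_s 1_{\{|\Delta X^n_s| > C\}}$ and $\check X = \sum_{s \le \cdot} \Delta X_s 1_{\{|\Delta X_s| > C\}}$, the total variation of $\check X^n - \check X$ over $[0,1]$ converges to $0$ in probability. -/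
open MeasureTheory Filter Set
open scoped ENNReal Topology

noncomputable section
open Classical

variable {Ω : Type*}

/-!
Choose `C > 0` at which, for every `k`, the probability that `Y` has at least `k` jumps of size
`> c` in `(0,1]` is continuous in `c`; these probabilities are antitone in `c`, so all but
countably many `C` qualify. Then for small `η`, with high probability `Y` has fewer than `M` jumps
above `C` and none of size in `(C - η, C + η]`. Where moreover `sup |Xⁿ - Y| < η / 2`, the jumps of
`Xⁿ` and `Y` differ by less than `η`, so truncation at `C` keeps the same jump times for both and
the total variation of the difference is at most `M η`. The jump counts are measurable because
a jump of a càdlàg path is detected by its increments over rational times.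
-/

-- Path versions of `IsCadlag` and `jump`: `IsCadlag X` unfolds to `∀ ω, IsCadlagFun (X · ω)`.
def IsCadlagFun (f : ℝ → ℝ) : Prop :=
  (∀ t, ContinuousWithinAt f (Ici t) t) ∧ ∀ t, ∃ l, Tendsto f (𝓝[<] t) (𝓝 l)

def leftJump (f : ℝ → ℝ) (t : ℝ) : ℝ := f t - Function.leftLim f t

def bigJumpTimes (f : ℝ → ℝ) (c u v : ℝ) : Set ℝ := {s ∈ Ioc u v | c < |leftJump f s|}

namespace IsCadlagFun

variable {f g : ℝ → ℝ}

theorem tendsto_leftLim (hf : IsCadlagFun f) (t : ℝ) :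
    Tendsto f (𝓝[<] t) (𝓝 (Function.leftLim f t)) := by
  obtain ⟨l, hl⟩ := hf.2 t
  rwa [leftLim_eq_of_tendsto hl]

theorem sub (hf : IsCadlagFun f) (hg : IsCadlagFun g) : IsCadlagFun fun t => f t - g t :=
  ⟨fun t => (hf.1 t).sub (hg.1 t),
    fun t => ⟨_, (hf.tendsto_leftLim t).sub (hg.tendsto_leftLim t)⟩⟩

theorem leftJump_sub (hf : IsCadlagFun f) (hg : IsCadlagFun g) (t : ℝ) :
    leftJump (fun s => f s - g s) t = leftJump f t - leftJump g t := by
  rw [leftJump, leftJump, leftJump,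
    leftLim_eq_of_tendsto ((hf.tendsto_leftLim t).sub (hg.tendsto_leftLim t))]
  ring

theorem tendsto_sub_ite_leftLim (hf : IsCadlagFun f) (x : ℝ) :
    Tendsto (fun t => f t - if t < x then Function.leftLim f x else f x) (𝓝 x) (𝓝 0) := by
  rw [← nhdsLT_sup_nhdsGE, tendsto_sup]
  constructor
  · rw [← sub_self (Function.leftLim f x)]
    refine (tendsto_congr' ?_).mp ((hf.tendsto_leftLim x).sub_const (Function.leftLim f x))
    filter_upwards [self_mem_nhdsWithin] with t (ht : t < x)
    rw [if_pos ht]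
  · rw [← sub_self (f x)]
    refine (tendsto_congr' ?_).mp ((hf.1 x).tendsto.sub_const (f x))
    filter_upwards [self_mem_nhdsWithin] with t ht
    rw [if_neg (not_lt.mpr ht)]

theorem abs_leftJump_le_of_forall_Ioc (hf : IsCadlagFun f) {a s L r : ℝ} (has : a < s)
    (h : ∀ t ∈ Ioc a s, |f t - L| ≤ r) : |leftJump f s| ≤ 2 * r := by
  have hleft : |Function.leftLim f s - L| ≤ r := by
    refine le_of_tendsto (((hf.tendsto_leftLim s).sub_const L).abs) ?_
    filter_upwards [Ioo_mem_nhdsLT has] with t ht using h t ⟨ht.1, ht.2.le⟩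
  calc |leftJump f s| = |(f s - L) - (Function.leftLim f s - L)| := by rw [leftJump]; ring_nf
    _ ≤ |f s - L| + |Function.leftLim f s - L| := abs_sub _ _
    _ ≤ 2 * r := by linarith [h s ⟨has, le_rfl⟩]

theorem eventually_abs_leftJump_le (hf : IsCadlagFun f) {c : ℝ} (hc : 0 < c) (x : ℝ) :
    ∀ᶠ s in 𝓝[≠] x, |leftJump f s| ≤ c := by
  obtain ⟨a, b, hx, hab⟩ := mem_nhds_iff_exists_Ioo_subset.mp <|
    (hf.tendsto_sub_ite_leftLim x).abs.eventually
      (ge_mem_nhds (by simpa using half_pos hc : |(0 : ℝ)| < c / 2))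
  rw [← nhdsLT_sup_nhdsGT, eventually_sup]
  constructor
  · filter_upwards [Ioo_mem_nhdsLT hx.1] with s hs
    refine (hf.abs_leftJump_le_of_forall_Ioc (L := Function.leftLim f x) (r := c / 2) hs.1
      fun t ht => ?_).trans_eq (by ring)
    simpa [ht.2.trans_lt hs.2] using hab ⟨ht.1, ht.2.trans_lt (hs.2.trans hx.2)⟩
  · filter_upwards [Ioo_mem_nhdsGT hx.2] with s hs
    refine (hf.abs_leftJump_le_of_forall_Ioc (L := f x) (r := c / 2) hs.1
      fun t ht => ?_).trans_eq (by ring)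
    simpa [not_lt.mpr ht.1.le] using hab ⟨hx.1.trans ht.1, ht.2.trans_lt hs.2⟩

theorem finite_bigJumpTimes (hf : IsCadlagFun f) {c : ℝ} (hc : 0 < c) (u v : ℝ) :
    (bigJumpTimes f c u v).Finite := by
  have hcod : {s | |leftJump f s| ≤ c} ∈ codiscreteWithin (Icc u v) :=
    mem_codiscreteWithin_iff_forall_mem_nhdsNE.mpr fun x _ =>
      mem_of_superset (hf.eventually_abs_leftJump_le hc x) subset_union_left
  refine (isCompact_Icc.finite_sdiff_of_mem_codiscreteWithin hcod).subset ?_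
  rintro s ⟨hs, hjump⟩
  exact ⟨Ioc_subset_Icc_self hs, not_le.mpr hjump⟩

theorem bddAbove_abs_image (hf : IsCadlagFun f) {K : Set ℝ} (hK : IsCompact K) :
    BddAbove ((fun t => |f t|) '' K) := by
  refine (Bornology.isBounded_image_of_isLocallyBounded_of_isCompact hK fun x => ?_).bddAbove
  refine ⟨_, (hf.tendsto_sub_ite_leftLim x).abs.eventually (ge_mem_nhds (by simp : |(0 : ℝ)| < 1)),
    (Metric.isBounded_Icc 0 (1 + |Function.leftLim f x| + |f x|)).subset ?_⟩
  rintro _ ⟨t, ht : |f t - _| ≤ 1, rfl⟩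
  have hlim :
      |(if t < x then Function.leftLim f x else f x)| ≤ |Function.leftLim f x| + |f x| := by
    split_ifs <;> simp
  have := abs_sub_abs_le_abs_sub (f t) (if t < x then Function.leftLim f x else f x)
  exact ⟨abs_nonneg _, by dsimp only; linarith⟩

theorem exists_rat_le_abs_sub (hf : IsCadlagFun f) {u : ℝ} {v : ℚ} {s d δ : ℝ}
    (hs : s ∈ Ioc u v) (hd : d < |leftJump f s|) (hδ : 0 < δ) :
    ∃ p q : ℚ, u ≤ p ∧ (p : ℝ) < q ∧ (q : ℝ) ≤ v ∧ (q : ℝ) - p < δ ∧ d ≤ |f q - f p| := by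
  obtain ⟨r, hr, hnear⟩ := Metric.eventually_nhds_iff.mp <|
    (hf.tendsto_sub_ite_leftLim s).abs.eventually
      (gt_mem_nhds (by simpa using half_pos (sub_pos.mpr hd) :
        |(0 : ℝ)| < (|leftJump f s| - d) / 2))
  set r' := min r (δ / 2)
  have hr' : 0 < r' := lt_min hr (half_pos hδ)
  obtain ⟨p, hup, hps⟩ := exists_rat_btwn (max_lt hs.1 (sub_lt_self s hr'))
  obtain ⟨q, hsq, hqv, hqs⟩ : ∃ q : ℚ, s ≤ q ∧ (q : ℝ) ≤ v ∧ (q : ℝ) < s + r' := by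
    rcases hs.2.eq_or_lt with hsv | hsv
    · exact ⟨v, hsv.le, le_rfl, by linarith⟩
    · obtain ⟨q, hsq, hq⟩ := exists_rat_btwn (lt_min hsv (lt_add_of_pos_right s hr'))
      exact ⟨q, hsq.le, hq.le.trans (min_le_left _ _), hq.trans_le (min_le_right _ _)⟩
  have hp : |f p - Function.leftLim f s| < (|leftJump f s| - d) / 2 := by
    have := hnear (y := p) (by
      rw [Real.dist_eq, abs_sub_lt_iff]
      constructor <;> linarith [le_max_right u (s - r'), min_le_left r (δ / 2)])
    rwa [if_pos hps] at this
  have hq : |f q - f s| < (|leftJump f s| - d) / 2 := by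
    have := hnear (y := q) (by
      rw [Real.dist_eq, abs_sub_lt_iff]
      constructor <;> linarith [min_le_left r (δ / 2)])
    rwa [if_neg (not_lt.mpr hsq)] at this
  refine ⟨p, q, (le_max_left _ _).trans hup.le, hps.trans_le hsq, hqv, ?_, ?_⟩
  · linarith [le_max_right u (s - r'), min_le_right r (δ / 2)]
  · have key := abs_add_three (f q - f p) (-(f q - f s)) (f p - Function.leftLim f s)
    rw [abs_neg, show f q - f p + -(f q - f s) + (f p - Function.leftLim f s) = leftJump f s by
      rw [leftJump]; ring] at key
    linarith

theorem exists_le_abs_leftJump (hf : IsCadlagFun f) {u v d : ℝ} (hd : 0 < d)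
    (h : ∀ δ > 0, ∃ p q, u ≤ p ∧ p < q ∧ q ≤ v ∧ q - p < δ ∧ d ≤ |f q - f p|) :
    ∃ s ∈ Ioc u v, d ≤ |leftJump f s| := by
  choose p q hup hpq hqv hqp hdpq using fun n : ℕ => h (1 / (n + 1)) Nat.one_div_pos_of_nat
  obtain ⟨x, hx, φ, hφ, hpx⟩ := isCompact_Icc.tendsto_subseq fun n =>
    (⟨hup n, (hpq n).le.trans (hqv n)⟩ : p n ∈ Icc u v)
  have hqx : Tendsto (q ∘ φ) atTop (𝓝 x) := by
    have : Tendsto (fun n => q (φ n) - p (φ n)) atTop (𝓝 0) :=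
      squeeze_zero (fun n => (sub_pos.2 (hpq _)).le) (fun n => (hqp (φ n)).le)
        (tendsto_one_div_add_atTop_nhds_zero_nat.comp hφ.tendsto_atTop)
    simpa [Function.comp_def] using this.add hpx
  set g : ℝ → ℝ := fun t => if t < x then Function.leftLim f x else f x
  -- a pair `p < q` near `x` sees the jump at `x` only if it straddles `x`, which forces `u < x`
  have hg : ∀ n, |g (q (φ n)) - g (p (φ n))| ≤ if u < x then |leftJump f x| else 0 := by
    intro n
    have hnn : 0 ≤ if u < x then |leftJump f x| else 0 := by split_ifs <;> simp
    by_cases hpx : p (φ n) < x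
    · by_cases hqx : q (φ n) < x
      · simpa [g, hpx, hqx] using hnn
      · rw [if_pos ((hup _).trans_lt hpx)]
        simp [g, hpx, hqx, leftJump]
    · have hqx : ¬ q (φ n) < x := fun h => hpx ((hpq _).trans h)
      simpa [g, hpx, hqx] using hnn
  have hlim := (((hf.tendsto_sub_ite_leftLim x).comp hqx).abs.add
    ((hf.tendsto_sub_ite_leftLim x).comp hpx).abs).add_const
      (if u < x then |leftJump f x| else 0)
  simp only [abs_zero, add_zero, zero_add] at hlim
  have hdx : d ≤ if u < x then |leftJump f x| else 0 := by
    refine ge_of_tendsto' hlim fun n => ?_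
    have key := abs_add_three (f (q (φ n)) - g (q (φ n))) (-(f (p (φ n)) - g (p (φ n))))
      (g (q (φ n)) - g (p (φ n)))
    rw [abs_neg, show f (q (φ n)) - g (q (φ n)) + -(f (p (φ n)) - g (p (φ n))) +
      (g (q (φ n)) - g (p (φ n))) = f (q (φ n)) - f (p (φ n)) by ring] at key
    simp only [Function.comp_apply]
    linarith [hdpq (φ n), hg n]
  split_ifs at hdx with hux
  · exact ⟨x, ⟨hux, hx.2⟩, hdx⟩
  · linarith

end IsCadlagFun

theorem abs_le_runSup {X : ℝ → Ω → ℝ} {ω : Ω} (hX : IsCadlagFun (X · ω)) {t : ℝ}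
    (ht : t ∈ Icc (0 : ℝ) 1) : |X t ω| ≤ runSup X ω :=
  le_csSup (hX.bddAbove_abs_image isCompact_Icc) (mem_image_of_mem _ ht)

theorem bigJumpTimes_anti {f : ℝ → ℝ} {c c' : ℝ} (h : c ≤ c') (u v : ℝ) :
    bigJumpTimes f c' u v ⊆ bigJumpTimes f c u v :=
  fun _ hs => ⟨hs.1, h.trans_lt hs.2⟩

theorem natCast_add_one_le_encard_bigJumpTimes_iff {f : ℝ → ℝ} {c u v : ℝ} {k : ℕ} :
    ((k + 1 : ℕ) : ℕ∞) ≤ (bigJumpTimes f c u v).encard ↔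
      ∃ q : ℚ, u ≤ q ∧ (k : ℕ∞) ≤ (bigJumpTimes f c u q).encard ∧
        (bigJumpTimes f c q v).Nonempty := by
  constructor
  · intro hk
    obtain ⟨T, hTsub, hTcard⟩ := exists_subset_encard_eq hk
    have hTfin : T.Finite := finite_of_encard_eq_coe hTcard
    obtain ⟨s, hsT, hsmax⟩ := T.exists_max_image id hTfin
      (nonempty_of_encard_ne_zero (by rw [hTcard]; simp))
    -- separate the last jump `s` of `T` from the others (and from `u`) by a rational `q`
    obtain ⟨b, hb, hbmax⟩ := (insert u (T \ {s})).exists_max_image id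
      ((hTfin.sdiff (t := {s})).insert u) (insert_nonempty u _)
    have hbs : b < s := by
      rcases hb with rfl | ⟨hbT, hbs⟩
      · exact (hTsub hsT).1.1
      · exact lt_of_le_of_ne (hsmax b hbT) hbs
    obtain ⟨q, hbq, hqs⟩ := exists_rat_btwn hbs
    refine ⟨q, (hbmax u (mem_insert _ _)).trans hbq.le, ?_,
      s, ⟨hqs, (hTsub hsT).1.2⟩, (hTsub hsT).2⟩
    have hcard := encard_sdiff_singleton_add_one hsT
    rw [hTcard, Nat.cast_succ] at hcard
    calc (k : ℕ∞) = (T \ {s}).encard := (WithTop.add_right_cancel ENat.one_ne_top hcard).symm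
      _ ≤ (bigJumpTimes f c u q).encard := encard_le_encard fun t ht =>
          ⟨⟨(hTsub ht.1).1.1, (hbmax t (mem_insert_of_mem _ ht)).trans hbq.le⟩, (hTsub ht.1).2⟩
  · rintro ⟨q, huq, hk, s, hs, hjump⟩
    calc ((k + 1 : ℕ) : ℕ∞) ≤ (insert s (bigJumpTimes f c u q)).encard := by
          rw [encard_insert_of_notMem fun h => h.1.2.not_gt hs.1]
          push_cast
          gcongr
      _ ≤ (bigJumpTimes f c u v).encard :=
          encard_le_encard <| insert_subset ⟨⟨huq.trans_lt hs.1, hs.2⟩, hjump⟩ fun t ht =>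
            ⟨⟨ht.1.1, ht.1.2.trans (hs.1.le.trans hs.2)⟩, ht.2⟩

def bigJumpCount (Y : ℝ → Ω → ℝ) (c : ℝ) (ω : Ω) : ℕ∞ := (bigJumpTimes (Y · ω) c 0 1).encard

theorem bigJumpCount_anti (Y : ℝ → Ω → ℝ) (ω : Ω) : Antitone (bigJumpCount Y · ω) :=
  fun _ _ h => encard_le_encard (bigJumpTimes_anti h 0 1)

theorem bigJumpCount_ne_top {Y : ℝ → Ω → ℝ} {ω : Ω} (hY : IsCadlagFun (Y · ω)) {c : ℝ}
    (hc : 0 < c) : bigJumpCount Y c ω ≠ ⊤ :=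
  (hY.finite_bigJumpTimes hc 0 1).encard_lt_top.ne

section Measurability

variable [MeasurableSpace Ω] {Y : ℝ → Ω → ℝ} {c : ℝ}

theorem measurableSet_bigJumpTimes_nonempty (hY : ∀ ω, IsCadlagFun (Y · ω))
    (hYm : ∀ t, Measurable (Y t)) (hc : 0 ≤ c) (u v : ℚ) :
    MeasurableSet {ω | (bigJumpTimes (Y · ω) c u v).Nonempty} := by
  have hrational : {ω | (bigJumpTimes (Y · ω) c u v).Nonempty} =
      ⋃ (d : ℚ) (_ : c < d), ⋂ n : ℕ, ⋃ (p : ℚ) (q : ℚ)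
        (_ : (u : ℝ) ≤ p ∧ (p : ℝ) < q ∧ (q : ℝ) ≤ v ∧ (q : ℝ) - p < 1 / (n + 1)),
        {ω | (d : ℝ) ≤ |Y q ω - Y p ω|} := by
    ext ω
    simp only [mem_ofPred_eq, mem_iUnion, mem_iInter, exists_prop]
    constructor
    · rintro ⟨s, hs, hjump⟩
      obtain ⟨d, hcd, hdj⟩ := exists_rat_btwn hjump
      refine ⟨d, hcd, fun n => ?_⟩
      obtain ⟨p, q, hup, hpq, hqv, hqp, hd⟩ :=
        (hY ω).exists_rat_le_abs_sub hs hdj Nat.one_div_pos_of_nat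
      exact ⟨p, q, ⟨hup, hpq, hqv, hqp⟩, hd⟩
    · rintro ⟨d, hcd, h⟩
      obtain ⟨s, hs, hd⟩ := (hY ω).exists_le_abs_leftJump (hc.trans_lt hcd) fun δ hδ => by
        obtain ⟨n, hn⟩ := exists_nat_one_div_lt hδ
        obtain ⟨p, q, ⟨hup, hpq, hqv, hqp⟩, hd⟩ := h n
        exact ⟨p, q, hup, hpq, hqv, hqp.trans hn, hd⟩
      exact ⟨s, hs, hcd.trans_le hd⟩
  rw [hrational]
  exact .iUnion fun d => .iUnion fun _ => .iInter fun n => .iUnion fun p => .iUnion fun q =>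
    .iUnion fun _ => measurableSet_le measurable_const ((hYm q).sub (hYm p)).abs

theorem measurableSet_natCast_le_encard_bigJumpTimes (hY : ∀ ω, IsCadlagFun (Y · ω))
    (hYm : ∀ t, Measurable (Y t)) (hc : 0 ≤ c) (k : ℕ) (u v : ℚ) :
    MeasurableSet {ω | (k : ℕ∞) ≤ (bigJumpTimes (Y · ω) c u v).encard} := by
  induction k generalizing v with
  | zero => simp
  | succ k ih =>
    simp_rw [natCast_add_one_le_encard_bigJumpTimes_iff, ofPred_exists, ofPred_and]
    exact .iUnion fun q => (MeasurableSet.const _).inter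
      ((ih q).inter (measurableSet_bigJumpTimes_nonempty hY hYm hc q v))

theorem measurableSet_natCast_le_bigJumpCount (hY : ∀ ω, IsCadlagFun (Y · ω))
    (hYm : ∀ t, Measurable (Y t)) (hc : 0 ≤ c) (k : ℕ) :
    MeasurableSet {ω | (k : ℕ∞) ≤ bigJumpCount Y c ω} := by
  have h := measurableSet_natCast_le_encard_bigJumpTimes hY hYm hc k 0 1
  rwa [Rat.cast_zero, Rat.cast_one] at h

end Measurability

theorem exists_forall_continuousAt_of_antitone {ι β : Type*} [Countable ι] [LinearOrder β]
    [TopologicalSpace β] [OrderTopology β] [SecondCountableTopology β] {F : ι → ℝ → β}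
    (hF : ∀ k, Antitone (F k)) {U : Set ℝ} (hU : IsOpen U) (hne : U.Nonempty) :
    ∃ x ∈ U, ∀ k, ContinuousAt (F k) x := by
  have hcount : (⋃ k, {x | ¬ContinuousAt (F k) x}).Countable :=
    countable_iUnion fun k => (hF k).countable_not_continuousAt
  obtain ⟨x, hx, hxU⟩ := (hcount.dense_compl ℝ).exists_mem_open hU hne
  exact ⟨x, hxU, by simpa using hx⟩

theorem tsum_le_natCast_mul_of_encard_support_le {ι : Type*} {F : ι → ℝ} {B : ℝ} {M : ℕ}
    (hFB : ∀ i, F i ≤ B) (hB : 0 ≤ B) (hsupp : (Function.support F).encard ≤ M) :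
    ∑' i, F i ≤ M * B := by
  have hfin : (Function.support F).Finite := finite_of_encard_le_coe hsupp
  rw [tsum_eq_sum' (s := hfin.toFinset) (by simp), ← nsmul_eq_mul]
  refine (Finset.sum_le_card_nsmul _ _ _ fun i _ => hFB i).trans (nsmul_le_nsmul_left hB ?_)
  exact_mod_cast hfin.encard_eq_coe_toFinset_card ▸ hsupp

theorem abs_ite_sub_ite_le {a b C η : ℝ} (hab : |a - b| < η)
    (hband : C - η < |b| → C + η < |b|) :
    |(if C < |a| then a else 0) - (if C < |b| then b else 0)| ≤
      if C + η < |b| then |a - b| else 0 := by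
  have hba := abs_sub_abs_le_abs_sub b a
  rw [abs_sub_comm] at hba
  have hab' := abs_sub_abs_le_abs_sub a b
  have hη := (abs_nonneg (a - b)).trans_lt hab
  by_cases hb : C + η < |b|
  · rw [if_pos hb, if_pos (by linarith), if_pos (by linarith)]
  · have : |b| ≤ C - η := not_lt.mp (mt hband hb)
    rw [if_neg hb, if_neg (by linarith), if_neg (by linarith), sub_zero, abs_zero]

theorem tsum_abs_sub_bigJumps_le {f g : ℝ → ℝ} (hf : IsCadlagFun f) (hg : IsCadlagFun g)
    {C η S : ℝ} {M : ℕ} (hS : ∀ t ∈ Icc (0 : ℝ) 1, |f t - g t| ≤ S) (hSη : 2 * S < η)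
    (hband : (bigJumpTimes g (C - η) 0 1).encard ≤ (bigJumpTimes g (C + η) 0 1).encard)
    (hM : (bigJumpTimes g (C + η) 0 1).encard ≤ M) :
    ∑' s : Ioc (0 : ℝ) 1, |(if C < |leftJump f s| then leftJump f s else 0) -
      (if C < |leftJump g s| then leftJump g s else 0)| ≤ M * (2 * S) := by
  have hS0 : 0 ≤ S := (abs_nonneg _).trans (hS 0 ⟨le_rfl, zero_le_one⟩)
  have hjump : ∀ s ∈ Ioc (0 : ℝ) 1, |leftJump f s - leftJump g s| ≤ 2 * S := fun s hs => by
    rw [← hf.leftJump_sub hg]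
    exact (hf.sub hg).abs_leftJump_le_of_forall_Ioc (L := 0) hs.1 fun t ht => by
      simpa using hS t ⟨ht.1.le, ht.2.trans hs.2⟩
  have hgap : bigJumpTimes g (C + η) 0 1 = bigJumpTimes g (C - η) 0 1 :=
    (finite_of_encard_le_coe hM).eq_of_subset_of_encard_le
      (bigJumpTimes_anti (by linarith) 0 1) hband
  have hterm : ∀ s : Ioc (0 : ℝ) 1,
      |(if C < |leftJump f s| then leftJump f s else 0) -
        (if C < |leftJump g s| then leftJump g s else 0)| ≤
      if C + η < |leftJump g s| then |leftJump f s - leftJump g s| else 0 := fun s =>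
    abs_ite_sub_ite_le ((hjump s s.2).trans_lt hSη) fun h =>
      (hgap.symm.subset ⟨s.2, h⟩).2
  refine tsum_le_natCast_mul_of_encard_support_le (fun s => (hterm s).trans ?_) (by positivity) ?_
  · split_ifs
    exacts [hjump s s.2, by positivity]
  · calc (Function.support _).encard
        ≤ (Subtype.val ⁻¹' bigJumpTimes g (C + η) 0 1 : Set (Ioc (0 : ℝ) 1)).encard :=
          encard_le_encard fun s hs => ⟨s.2, by
            by_contra h
            exact hs (le_antisymm ((hterm s).trans_eq (if_neg h)) (abs_nonneg _))⟩
      _ = (bigJumpTimes g (C + η) 0 1).encard :=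
          encard_preimage_of_injective_subset_range Subtype.val_injective
            (by rw [Subtype.range_coe]; exact fun s hs => hs.1)
      _ ≤ M := hM

theorem setOf_le_tsum_abs_sub_bigJumps_subset {X Y : ℝ → Ω → ℝ} (hX : ∀ ω, IsCadlagFun (X · ω))
    (hY : ∀ ω, IsCadlagFun (Y · ω)) {C η ε : ℝ} {M : ℕ} (hη : 0 < η) (hηM : η * M < ε) :
    {ω | ε ≤ ∑' s : Ioc (0 : ℝ) 1, |(if C < |jump X s ω| then jump X s ω else 0) -
        (if C < |jump Y s ω| then jump Y s ω else 0)|} ⊆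
      {ω | η / 2 ≤ runSup (fun t ω => X t ω - Y t ω) ω} ∪
        {ω | bigJumpCount Y (C + η) ω < bigJumpCount Y (C - η) ω} ∪
        {ω | (M : ℕ∞) ≤ bigJumpCount Y C ω} := by
  intro ω (hω : ε ≤ _)
  by_contra hgood
  simp only [mem_union, mem_ofPred_eq, not_or, not_le, not_lt] at hgood
  obtain ⟨⟨hS, hband⟩, hM⟩ := hgood
  refine hω.not_gt ?_
  calc _ ≤ M * (2 * runSup (fun t ω => X t ω - Y t ω) ω) :=
        tsum_abs_sub_bigJumps_le (hX ω) (hY ω)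
          (fun t ht => abs_le_runSup (X := fun t ω => X t ω - Y t ω) ((hX ω).sub (hY ω)) ht)
          (by linarith) hband ((bigJumpCount_anti Y ω (by linarith)).trans hM.le)
    _ ≤ η * M := by rw [mul_comm]; gcongr; linarith
    _ < ε := hηM

theorem setOf_lt_subset_union {N : ℝ → Ω → ℕ∞} (hanti : ∀ ω, Antitone (N · ω)) {a b c : ℝ}
    (hca : c ≤ a) (M : ℕ) :
    {ω | N b ω < N a ω} ⊆ {ω | (M : ℕ∞) ≤ N c ω} ∪
      ⋃ k ∈ Finset.range M, {ω | (k : ℕ∞) ≤ N a ω} \ {ω | (k : ℕ∞) ≤ N b ω} := by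
  intro ω (hω : N b ω < N a ω)
  by_cases hbig : (M : ℕ∞) ≤ N c ω
  · exact Or.inl hbig
  · have hlt : N a ω < M := (hanti ω hca).trans_lt (not_le.mp hbig)
    obtain ⟨k, hk⟩ := ENat.ne_top_iff_exists.mp (hlt.trans (ENat.natCast_lt_top M)).ne
    exact Or.inr (mem_biUnion (Finset.mem_range.mpr (by exact_mod_cast hk ▸ hlt))
      ⟨hk.le, fun h => (hω.trans_eq hk.symm).not_ge h⟩)

section Counting

variable [MeasurableSpace Ω] {μ : Measure Ω} [IsFiniteMeasure μ]

theorem tendsto_measure_natCast_le_atTop {N : Ω → ℕ∞}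
    (hN : ∀ k : ℕ, MeasurableSet {ω | (k : ℕ∞) ≤ N ω}) (hfin : ∀ ω, N ω ≠ ⊤) :
    Tendsto (fun k : ℕ => μ {ω | (k : ℕ∞) ≤ N ω}) atTop (𝓝 0) := by
  have hempty : ⋂ k : ℕ, {ω | (k : ℕ∞) ≤ N ω} = ∅ := by
    refine eq_empty_of_forall_notMem fun ω hω => ?_
    obtain ⟨n, hn⟩ := ENat.ne_top_iff_exists.mp (hfin ω)
    have : ((n + 1 : ℕ) : ℕ∞) ≤ n := hn ▸ mem_iInter.mp hω (n + 1)
    exact absurd (Nat.cast_le.mp this) (by omega)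
  have h := tendsto_measure_iInter_atTop (μ := μ) (fun k => (hN k).nullMeasurableSet)
    (fun k l hkl ω (hω : (l : ℕ∞) ≤ N ω) => (Nat.cast_le.mpr hkl).trans hω)
    ⟨0, measure_ne_top μ _⟩
  rwa [hempty, measure_empty] at h

theorem tendsto_measure_sdiff_of_continuousAt {N : ℝ → Ω → ℕ∞} (hanti : ∀ ω, Antitone (N · ω))
    (hmeas : ∀ c > 0, ∀ k : ℕ, MeasurableSet {ω | (k : ℕ∞) ≤ N c ω}) {C : ℝ} (hC : 0 < C) {k : ℕ}
    (hcont : ContinuousAt (fun c => μ {ω | (k : ℕ∞) ≤ N c ω}) C) :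
    Tendsto (fun η => μ ({ω | (k : ℕ∞) ≤ N (C - η) ω} \ {ω | (k : ℕ∞) ≤ N (C + η) ω}))
      (𝓝[>] 0) (𝓝 0) := by
  have hminus := hcont.tendsto.comp (tendsto_nhdsWithin_of_tendsto_nhds (s := Ioi 0)
    ((continuous_sub_left C).tendsto' 0 C (sub_zero C)))
  have hplus := hcont.tendsto.comp (tendsto_nhdsWithin_of_tendsto_nhds (s := Ioi 0)
    ((continuous_const_add C).tendsto' 0 C (add_zero C)))
  have hdiff := ENNReal.Tendsto.sub hminus hplus (Or.inl (measure_ne_top _ _))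
  rw [tsub_self] at hdiff
  refine hdiff.congr' ?_
  filter_upwards [Ioo_mem_nhdsGT hC] with η hη
  exact (measure_sdiff (fun ω (hω : (k : ℕ∞) ≤ N (C + η) ω) =>
    hω.trans (hanti ω (by linarith [hη.1]))) ((hmeas _ (by linarith [hη.1]) k).nullMeasurableSet)
    (measure_ne_top _ _)).symm

theorem tendsto_measure_lt_of_continuousAt {N : ℝ → Ω → ℕ∞} (hanti : ∀ ω, Antitone (N · ω))
    (hmeas : ∀ c > 0, ∀ k : ℕ, MeasurableSet {ω | (k : ℕ∞) ≤ N c ω})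
    (hfin : ∀ c > 0, ∀ ω, N c ω ≠ ⊤) {C : ℝ} (hC : 0 < C)
    (hcont : ∀ k : ℕ, ContinuousAt (fun c => μ {ω | (k : ℕ∞) ≤ N c ω}) C) :
    Tendsto (fun η => μ {ω | N (C + η) ω < N (C - η) ω}) (𝓝[>] 0) (𝓝 0) := by
  rw [ENNReal.tendsto_nhds_zero]
  intro θ hθ
  obtain ⟨M, hM⟩ := (ENNReal.tendsto_nhds_zero.mp (tendsto_measure_natCast_le_atTop (μ := μ)
    (hmeas _ (half_pos hC)) (hfin _ (half_pos hC))) (θ / 2) (ENNReal.half_pos hθ.ne')).exists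
  have hsum := tendsto_finsetSum (Finset.range M) fun k _ =>
    tendsto_measure_sdiff_of_continuousAt hanti hmeas hC (hcont k)
  rw [Finset.sum_const_zero] at hsum
  filter_upwards [ENNReal.tendsto_nhds_zero.mp hsum (θ / 2) (ENNReal.half_pos hθ.ne'),
    Ioo_mem_nhdsGT (half_pos hC)] with η hη hηC
  calc μ {ω | N (C + η) ω < N (C - η) ω}
      ≤ μ {ω | (M : ℕ∞) ≤ N (C / 2) ω} + ∑ k ∈ Finset.range M,
          μ ({ω | (k : ℕ∞) ≤ N (C - η) ω} \ {ω | (k : ℕ∞) ≤ N (C + η) ω}) :=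
        (measure_mono (setOf_lt_subset_union hanti (by linarith [hηC.2]) M)).trans <|
          (measure_union_le _ _).trans (add_le_add le_rfl (measure_biUnion_finset_le _ _))
    _ ≤ θ / 2 + θ / 2 := add_le_add hM hη
    _ = θ := ENNReal.add_halves θ

end Counting

theorem bigjump_TV_convergence_general
    {m : MeasurableSpace Ω} (μ : Measure Ω) [IsProbabilityMeasure μ]
    (X : ℕ → ℝ → Ω → ℝ) (Y : ℝ → Ω → ℝ)
    (hcad : ∀ n, IsCadlag (X n)) (hYcad : IsCadlag Y)
    (hYm : ∀ t, Measurable fun ω => Y t ω)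
    (hucp : TendstoUCP μ X Y) :
    ∃ C > (0 : ℝ), TendstoInMeasure μ
      (fun n ω => ∑' s : Ioc (0 : ℝ) 1,
        |(if C < |jump (X n) s ω| then jump (X n) s ω else 0) -
          (if C < |jump Y s ω| then jump Y s ω else 0)|) atTop (fun _ => (0 : ℝ)) := by
  have hXc : ∀ n ω, IsCadlagFun (X n · ω) := hcad
  have hYc : ∀ ω, IsCadlagFun (Y · ω) := hYcad
  have hmeas : ∀ c > 0, ∀ k : ℕ, MeasurableSet {ω | (k : ℕ∞) ≤ bigJumpCount Y c ω} :=
    fun c hc => measurableSet_natCast_le_bigJumpCount hYc hYm hc.le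
  have hfin : ∀ c > 0, ∀ ω, bigJumpCount Y c ω ≠ ⊤ := fun c hc ω => bigJumpCount_ne_top (hYc ω) hc
  obtain ⟨C, hC, hcont⟩ := exists_forall_continuousAt_of_antitone
    (F := fun (k : ℕ) c => μ {ω | (k : ℕ∞) ≤ bigJumpCount Y c ω})
    (fun k _ _ h => measure_mono fun ω (hω : _ ≤ _) => hω.trans (bigJumpCount_anti Y ω h))
    isOpen_Ioi ⟨1, mem_Ioi.mpr one_pos⟩
  refine ⟨C, hC, tendstoInMeasure_iff_dist.mpr fun ε hε =>
    ENNReal.tendsto_nhds_zero.mpr fun θ hθ => ?_⟩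
  have hθ3 : 0 < θ / 3 := ENNReal.div_pos hθ.ne' ENNReal.ofNat_ne_top
  obtain ⟨M, hM⟩ := (ENNReal.tendsto_nhds_zero.mp
    (tendsto_measure_natCast_le_atTop (μ := μ) (hmeas C hC) (hfin C hC)) _ hθ3).exists
  obtain ⟨η, hη, hband, hηM⟩ : ∃ η > 0,
      μ {ω | bigJumpCount Y (C + η) ω < bigJumpCount Y (C - η) ω} ≤ θ / 3 ∧ η * M < ε := by
    have hεM : ∀ᶠ η in 𝓝[>] (0 : ℝ), η * M < ε := (tendsto_nhdsWithin_of_tendsto_nhds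
      ((continuous_mul_const _).tendsto' 0 0 (zero_mul _))).eventually (gt_mem_nhds hε)
    exact (eventually_mem_nhdsWithin.and ((ENNReal.tendsto_nhds_zero.mp
      (tendsto_measure_lt_of_continuousAt (bigJumpCount_anti Y) hmeas hfin hC hcont) _ hθ3).and
        hεM)).exists
  filter_upwards [ENNReal.tendsto_nhds_zero.mp (hucp (η / 2) (half_pos hη)) _ hθ3] with n hn
  refine (measure_mono fun ω (hω : ε ≤ dist _ _) =>
    setOf_le_tsum_abs_sub_bigJumps_subset (C := C) (hXc n) hYc hη hηM ?_).trans ?_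
  · rwa [Real.dist_0_eq_abs, abs_of_nonneg (tsum_nonneg fun _ => abs_nonneg _)] at hω
  · exact ((measure_union_le _ _).trans (add_le_add ((measure_union_le _ _).trans
      (add_le_add hn hband)) hM)).trans_eq (ENNReal.add_thirds θ)

/-- **Convergence of the big-jump parts in total variation.** If semimartingales `Xⁿ` with
`Xⁿ_0 = 0` converge uniformly in probability on `[0,1]` to a càdlàg process `Y`, then there is
`C > 0` such that the total variation over `[0,1]` of the difference of the big-jump parts
`∑_{s ≤ ·} ΔXⁿ_s 1_{|ΔXⁿ_s| > C}` and `∑_{s ≤ ·} ΔY_s 1_{|ΔY_s| > C}` tends to `0` in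
probability. -/
theorem bigjump_TV_convergence
    {m : MeasurableSpace Ω} (μ : Measure Ω) [IsProbabilityMeasure μ]
    (X : ℕ → ℝ → Ω → ℝ) (Y : ℝ → Ω → ℝ)
    (hcad : ∀ n, IsCadlag (X n)) (hYcad : IsCadlag Y)
    (hXm : ∀ n t, Measurable fun ω => X n t ω) (hYm : ∀ t, Measurable fun ω => Y t ω)
    (h0 : ∀ n ω, X n 0 ω = 0)
    (hucp : TendstoUCP μ X Y) :
    ∃ C > (0 : ℝ), TendstoInMeasure μ
      (fun n ω => ∑' s : Ioc (0 : ℝ) 1,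
        |(if C < |jump (X n) s ω| then jump (X n) s ω else 0) -
          (if C < |jump Y s ω| then jump Y s ω else 0)|) atTop (fun _ => (0 : ℝ)) :=
  bigjump_TV_convergence_general (m := m) μ X Y hcad hYcad hYm hucp
end
end
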